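/- The coefficient of w¹ in S(0) = (1 - wx - √(1-(4+2w)x+(4w+w²)x²))/(2x) equals (1-2x-√(1-4x))/(2√(1-4x)), i.e., the generating function for skew Dyck paths with exactly one south-west step. -/

import Mathlib

inductive SkewStep : Type
  | up : SkewStep
  | down : SkewStep
  | red : SkewStep
deriving DecidableEq

def SkewStep.val : SkewStep → ℤ
  | SkewStep.up => 1
  | SkewStep.down => -1
  | SkewStep.red => -1

def SkewStep.ok (a b : SkewStep) : Prop :=
  ¬ (a = SkewStep.up ∧ b = SkewStep.red) ∧ ¬ (a = SkewStep.red ∧ b = SkewStep.up)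

def IsSkewPrefix (l : List SkewStep) : Prop :=
  l.Chain' SkewStep.ok ∧ ∀ k, 0 ≤ ((l.take k).map SkewStep.val).sum

def IsSkewPath (l : List SkewStep) (j : ℤ) : Prop :=
  IsSkewPrefix l ∧ (l.map SkewStep.val).sum = j

open PowerSeries

/-!
Cutting a nonempty skew Dyck path at its first return to the axis writes it uniquely as
`U P D Q` with `P, Q` paths, or as `U P L` with `P` a nonempty path (`L` is the red step, which
may neither follow nor precede `U`). So the generating function `A(x, w)` of paths by semilength
and number of red steps satisfies `A = 1 + x A² + w x (A - 1)`. The hypotheses on `W` say that `S`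
satisfies the same equation, whose power series solution is unique, so `S = A`. At `w = 0` it
becomes the Catalan equation `C = 1 + x C²`, whence `√(1 - 4x) = 1 - 2xC`; its `w`-derivative at
`w = 0` is `T = 2xCT + x(C - 1)`, which rearranges to the claimed identity.
-/

open Finset.HasAntidiagonal
open scoped Polynomial

namespace PowerSeries

variable {R : Type*} [CommRing R]

lemma eq_zero_of_eq_X_mul_mul {D U : R⟦X⟧} (h : D = X * U * D) : D = 0 := by
  have dvd : ∀ k, X ^ k ∣ D := fun k => by
    induction k with
    | zero => simp
    | succ k ih =>
      rw [h, pow_succ', mul_assoc]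
      exact mul_dvd_mul_left X (dvd_mul_of_dvd_right ih U)
  ext n
  simpa using X_pow_dvd_iff.1 (dvd (n + 1)) n n.lt_succ_self

lemma eq_of_sq_eq_sq [IsDomain R] [NeZero (2 : R)] {f g : R⟦X⟧} (h : f ^ 2 = g ^ 2)
    (hfg : constantCoeff f = constantCoeff g) (hg : constantCoeff g ≠ 0) : f = g := by
  refine (sq_eq_sq_iff_eq_or_eq_neg.1 h).resolve_right fun hneg => hg ?_
  have : 2 * constantCoeff g = 0 := by
    rw [two_mul]
    nth_rewrite 1 [← hfg]
    rw [hneg, map_neg, neg_add_cancel]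
  exact (mul_eq_zero.1 this).resolve_left two_ne_zero

/-- Setting `w = 0` in a power series with coefficients in `R[w]`. -/
noncomputable def evalW0 : R[X]⟦X⟧ →+* R⟦X⟧ :=
  map Polynomial.constantCoeff

/-- The `w`-derivative at `w = 0` of a power series with coefficients in `R[w]`. -/
noncomputable def derivW0 : R[X]⟦X⟧ →+ R⟦X⟧ where
  toFun f := mk fun n => (coeff n f).coeff 1
  map_zero' := by ext; simp
  map_add' f g := by ext; simp

lemma coeff_derivW0 (n : ℕ) (f : R[X]⟦X⟧) : coeff n (derivW0 f) = (coeff n f).coeff 1 := by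
  simp [derivW0]

lemma derivW0_mul (f g : R[X]⟦X⟧) :
    derivW0 (f * g) = evalW0 f * derivW0 g + derivW0 f * evalW0 g := by
  ext n
  simp only [coeff_derivW0, coeff_mul, map_add, Polynomial.finsetSum_coeff, Polynomial.coeff_mul,
    ← Finset.sum_add_distrib]
  refine Finset.sum_congr rfl fun p _ => ?_
  rw [show antidiagonal 1 = {(0, 1), (1, 0)} from rfl, Finset.sum_pair (by decide)]
  simp [evalW0, Polynomial.coeff_zero_eq_eval_zero]

@[simp] lemma evalW0_X : evalW0 (X : R[X]⟦X⟧) = X := map_X _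

@[simp] lemma evalW0_C_X : evalW0 (C (Polynomial.X : R[X])) = 0 := by
  simp [evalW0]

@[simp] lemma derivW0_one : derivW0 (1 : R[X]⟦X⟧) = 0 := by
  ext n
  rw [coeff_derivW0, coeff_one]
  split_ifs <;> simp [Polynomial.coeff_one]

@[simp] lemma derivW0_X : derivW0 (X : R[X]⟦X⟧) = 0 := by
  ext n
  rw [coeff_derivW0, coeff_X]
  split_ifs <;> simp [Polynomial.coeff_one]

@[simp] lemma derivW0_C_X : derivW0 (C (Polynomial.X : R[X])) = 1 := by
  ext n
  rw [coeff_derivW0, coeff_C, coeff_one]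
  split_ifs <;> simp

end PowerSeries

namespace SkewStep

instance : Fintype SkewStep :=
  ⟨{up, down, red}, fun x => by cases x <;> simp⟩

@[simp] lemma val_up : up.val = 1 := rfl

@[simp] lemma val_down : down.val = -1 := rfl

@[simp] lemma val_red : red.val = -1 := rfl

lemma val_eq_neg_one_of_ne_up {a : SkewStep} (h : a ≠ up) : a.val = -1 := by
  cases a <;> simp_all [val]

lemma eq_up_of_val_nonneg {a : SkewStep} (h : 0 ≤ a.val) : a = up := by
  cases a <;> simp_all [val]

@[simp] lemma ok_down (a : SkewStep) : ok a down := by cases a <;> simp [ok]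

@[simp] lemma down_ok (b : SkewStep) : ok down b := by cases b <;> simp [ok]

@[simp] lemma up_ok_up : ok up up := by simp [ok]

@[simp] lemma not_ok_up_red : ¬ ok up red := by simp [ok]

@[simp] lemma not_ok_red_up : ¬ ok red up := by simp [ok]

lemma ok_red_of_ne_up {a : SkewStep} (h : a ≠ up) : ok a red := by
  cases a <;> simp_all [ok]

lemma even_length_add_sum (l : List SkewStep) : Even ((l.map val).sum + l.length) := by
  induction l with
  | nil => simp
  | cons a l ih =>
    have ha : Even (a.val + 1) := by cases a <;> simp [val]
    rw [show ((a :: l).map val).sum + ((a :: l).length : ℤ)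
        = (a.val + 1) + ((l.map val).sum + l.length) by simp; ring]
    exact ha.add ih

end SkewStep

open SkewStep

def NonnegFrom (h : ℤ) (l : List SkewStep) : Prop :=
  ∀ k, 0 ≤ h + ((l.take k).map val).sum

namespace NonnegFrom

lemma nonneg {h : ℤ} {l : List SkewStep} (hl : NonnegFrom h l) : 0 ≤ h := by
  simpa using hl 0

@[simp] lemma nil_iff {h : ℤ} : NonnegFrom h [] ↔ 0 ≤ h := by
  simp [NonnegFrom]

@[simp] lemma cons_iff {h : ℤ} {a : SkewStep} {l : List SkewStep} :
    NonnegFrom h (a :: l) ↔ 0 ≤ h ∧ NonnegFrom (h + a.val) l := by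
  refine ⟨fun hl => ⟨hl.nonneg, fun k => ?_⟩, fun ⟨h0, hl⟩ k => ?_⟩
  · simpa [add_assoc] using hl (k + 1)
  · cases k
    · simpa using h0
    · simpa [add_assoc] using hl _

@[simp] lemma append_iff {h : ℤ} {l₁ l₂ : List SkewStep} :
    NonnegFrom h (l₁ ++ l₂) ↔ NonnegFrom h l₁ ∧ NonnegFrom (h + (l₁.map val).sum) l₂ := by
  induction l₁ generalizing h with
  | nil => simpa using fun hl => hl.nonneg
  | cons a l ih => simp [ih, add_assoc, and_assoc]

lemma mono {h h' : ℤ} {l : List SkewStep} (hl : NonnegFrom h l) (hh : h ≤ h') :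
    NonnegFrom h' l := fun k => by linarith [hl k]

lemma head_eq_up {a : SkewStep} {l : List SkewStep} (hl : NonnegFrom 0 (a :: l)) : a = up :=
  eq_up_of_val_nonneg (by simpa using (cons_iff.1 hl).2.nonneg)

end NonnegFrom

lemma isSkewPath_zero_iff {l : List SkewStep} :
    IsSkewPath l 0 ↔ l.IsChain ok ∧ NonnegFrom 0 l ∧ (l.map val).sum = 0 := by
  simp only [IsSkewPath, IsSkewPrefix, NonnegFrom, zero_add, and_assoc]
  rfl

lemma exists_eq_append_cons_of_sum_neg {l : List SkewStep} (hl : (l.map val).sum < 0) :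
    ∃ Q d R, l = Q ++ d :: R ∧ NonnegFrom 0 Q ∧ (Q.map val).sum = 0 ∧ d.val = -1 := by
  induction hlen : l.length using Nat.strong_induction_on generalizing l with
  | _ n ih =>
  obtain _ | ⟨a, l⟩ := l
  · simp at hl
  obtain rfl | ha := eq_or_ne a up
  · -- after the initial `U`, take the first return `Q d` of `l` to height `1`, then the first
    -- descent `Q' d'` of the remaining walk `R` below that height
    have hl' : (l.map val).sum < 0 := by
      simp only [List.map_cons, val_up, List.sum_cons] at hl
      linarith
    obtain ⟨Q, d, R, rfl, hQ, hQs, hd⟩ := ih _ (by simp [← hlen]) hl' rfl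
    have hR : (R.map val).sum < 0 := by
      simp only [List.map_cons, List.map_append, List.sum_cons, List.sum_append, val_up, hQs,
        hd] at hl
      linarith
    have hRlen : R.length < n := by
      simp only [← hlen, List.length_cons, List.length_append]
      omega
    obtain ⟨Q', d', R', rfl, hQ', hQs', hd'⟩ := ih _ hRlen hR rfl
    refine ⟨up :: Q ++ d :: Q', d', R', by simp, ?_, ?_, hd'⟩
    · simp [hQs, hd, hQ', hQ.mono zero_le_one]
    · simp [hQs, hd, hQs']
  · exact ⟨[], a, l, rfl, by simp, rfl, val_eq_neg_one_of_ne_up ha⟩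

lemma not_nonnegFrom_append_cons {Q R : List SkewStep} {d : SkewStep}
    (hQ : (Q.map val).sum = 0) (hd : d.val = -1) : ¬ NonnegFrom 0 (Q ++ d :: R) := by
  simp only [NonnegFrom.append_iff, NonnegFrom.cons_iff, hQ, hd]
  exact fun h => by linarith [h.2.2.nonneg]

lemma isChain_up_cons {Q : List SkewStep} (hc : Q.IsChain ok) (hn : NonnegFrom 0 Q) :
    (up :: Q).IsChain ok := by
  obtain _ | ⟨q, Q⟩ := Q
  · simp
  · obtain rfl := hn.head_eq_up
    exact List.isChain_cons_cons.2 ⟨up_ok_up, hc⟩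

lemma ne_up_of_append_singleton {Q : List SkewStep} {b : SkewStep}
    (hn : NonnegFrom 0 (Q ++ [b])) (hs : ((Q ++ [b]).map val).sum = 0) : b ≠ up := by
  rintro rfl
  simp only [NonnegFrom.append_iff, NonnegFrom.cons_iff] at hn
  simp only [List.map_append, List.map_cons, val_up, List.map_nil, List.sum_append, List.sum_cons,
    List.sum_nil] at hs
  linarith [hn.2.1]

namespace IsSkewPath

lemma up_cons_append_down {Q R : List SkewStep} (hQ : IsSkewPath Q 0) (hR : IsSkewPath R 0) :
    IsSkewPath (up :: Q ++ down :: R) 0 := by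
  obtain ⟨hQc, hQn, hQs⟩ := isSkewPath_zero_iff.1 hQ
  obtain ⟨hRc, hRn, hRs⟩ := isSkewPath_zero_iff.1 hR
  refine isSkewPath_zero_iff.2 ⟨?_, by simp [hQs, hQn.mono zero_le_one, hRn], by simp [hQs, hRs]⟩
  exact List.isChain_append.2 ⟨isChain_up_cons hQc hQn, List.isChain_cons.2 ⟨by simp, hRc⟩,
    by simp⟩

lemma up_cons_append_red {Q : List SkewStep} (hQ : IsSkewPath Q 0) (hne : Q ≠ []) :
    IsSkewPath (up :: Q ++ [red]) 0 := by
  obtain ⟨hc, hn, hs⟩ := isSkewPath_zero_iff.1 hQ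
  refine isSkewPath_zero_iff.2 ⟨?_, by simp [hs, hn.mono zero_le_one], by simp [hs]⟩
  obtain ⟨Q, b, rfl⟩ := (List.eq_nil_or_concat Q).resolve_left hne
  simp only [List.concat_eq_append] at *
  refine List.isChain_append.2 ⟨isChain_up_cons hc hn, by simp, ?_⟩
  rw [← List.cons_append, List.getLast?_concat]
  simpa using ok_red_of_ne_up (ne_up_of_append_singleton hn hs)

lemma even_length {l : List SkewStep} (hl : IsSkewPath l 0) : Even l.length := by
  simpa [hl.2] using even_length_add_sum l

lemma eq_of_append_cons_eq {Q₁ Q₂ R₁ R₂ : List SkewStep} {d₁ d₂ : SkewStep}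
    (hQ₁ : IsSkewPath Q₁ 0) (hQ₂ : IsSkewPath Q₂ 0) (hd₁ : d₁ ≠ up) (hd₂ : d₂ ≠ up)
    (h : Q₁ ++ d₁ :: R₁ = Q₂ ++ d₂ :: R₂) : Q₁ = Q₂ ∧ d₁ = d₂ ∧ R₁ = R₂ := by
  obtain ⟨-, hn₁, hs₁⟩ := isSkewPath_zero_iff.1 hQ₁
  obtain ⟨-, hn₂, hs₂⟩ := isSkewPath_zero_iff.1 hQ₂
  rcases List.append_eq_append_iff.1 h with ⟨_ | ⟨x, X⟩, rfl, hX⟩ | ⟨_ | ⟨x, X⟩, rfl, hX⟩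
  · simp_all
  · obtain ⟨rfl, -⟩ := List.cons_eq_cons.1 hX
    exact absurd hn₂ (not_nonnegFrom_append_cons hs₁ (val_eq_neg_one_of_ne_up hd₁))
  · simp_all
  · obtain ⟨rfl, -⟩ := List.cons_eq_cons.1 hX
    exact absurd hn₁ (not_nonnegFrom_append_cons hs₂ (val_eq_neg_one_of_ne_up hd₂))

/-- First-return decomposition of a nonempty skew path. -/
lemma eq_up_cons_append {l : List SkewStep} (hl : IsSkewPath l 0) (hne : l ≠ []) :
    (∃ Q R, IsSkewPath Q 0 ∧ IsSkewPath R 0 ∧ l = up :: Q ++ down :: R) ∨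
      ∃ Q, IsSkewPath Q 0 ∧ Q ≠ [] ∧ l = up :: Q ++ [red] := by
  obtain ⟨hc, hn, hs⟩ := isSkewPath_zero_iff.1 hl
  obtain ⟨a, m, rfl⟩ := List.exists_cons_of_ne_nil hne
  obtain rfl := hn.head_eq_up
  obtain ⟨Q, d, R, rfl, hQn, hQs, hd⟩ :=
    exists_eq_append_cons_of_sum_neg (l := m) (by
      simp only [List.map_cons, val_up, List.sum_cons] at hs
      linarith)
  obtain ⟨hQc, hdRc, -⟩ := List.isChain_append.1 (List.isChain_cons.1 hc).2
  have hRn : NonnegFrom 0 R := by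
    simp only [NonnegFrom.cons_iff, NonnegFrom.append_iff, hQs, hd] at hn
    simpa using hn.2.2.2
  have hRs : (R.map val).sum = 0 := by
    simp only [List.map_cons, List.map_append, List.sum_cons, List.sum_append, val_up, hQs, hd]
      at hs
    linarith
  have hQ : IsSkewPath Q 0 := isSkewPath_zero_iff.2 ⟨hQc, hQn, hQs⟩
  cases d
  · simp at hd
  · exact .inl ⟨Q, R, hQ, isSkewPath_zero_iff.2 ⟨(List.isChain_cons.1 hdRc).2, hRn, hRs⟩, rfl⟩
  · refine .inr ⟨Q, hQ, ?_, ?_⟩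
    · rintro rfl
      simp at hc
    · obtain _ | ⟨r, R⟩ := R
      · rfl
      · obtain rfl := hRn.head_eq_up
        simp at hdRc

end IsSkewPath

lemma finite_setOf_isSkewPath (n : ℕ) :
    {l : List SkewStep | l.length = 2 * n ∧ IsSkewPath l 0}.Finite :=
  (List.finite_length_eq SkewStep (2 * n)).subset fun _ hl => hl.1

noncomputable def skewPaths (n : ℕ) : Finset (List SkewStep) :=
  (finite_setOf_isSkewPath n).toFinset

@[simp] lemma mem_skewPaths {n : ℕ} {l : List SkewStep} :
    l ∈ skewPaths n ↔ l.length = 2 * n ∧ IsSkewPath l 0 :=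
  Set.Finite.mem_toFinset _

lemma skewPaths_zero : skewPaths 0 = {[]} := by
  ext l
  simp only [mem_skewPaths, Finset.mem_singleton, mul_zero, List.length_eq_zero_iff]
  exact ⟨fun h => h.1, fun h => ⟨h, h ▸ isSkewPath_zero_iff.2 ⟨List.isChain_nil, by simp, rfl⟩⟩⟩

/-- First-return decompositions of the paths of semilength `n + 1`: `U P D Q`, indexed by the
semilengths of `P` and `Q`, and `U P L` with `P ≠ []`. -/
noncomputable def firstReturnPieces (n : ℕ) :
    Finset ((Σ _ : ℕ × ℕ, List SkewStep × List SkewStep) ⊕ List SkewStep) :=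
  ((antidiagonal n).sigma fun p => skewPaths p.1 ×ˢ skewPaths p.2).disjSum ((skewPaths n).erase [])

def glueFirstReturn :
    (Σ _ : ℕ × ℕ, List SkewStep × List SkewStep) ⊕ List SkewStep → List SkewStep :=
  Sum.elim (fun x => up :: x.2.1 ++ down :: x.2.2) (fun Q => up :: Q ++ [red])

@[simp] lemma inl_mem_firstReturnPieces {n : ℕ} {p : ℕ × ℕ} {Q R : List SkewStep} :
    Sum.inl ⟨p, Q, R⟩ ∈ firstReturnPieces n ↔
      p.1 + p.2 = n ∧ Q ∈ skewPaths p.1 ∧ R ∈ skewPaths p.2 := by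
  simp [firstReturnPieces, and_assoc]

@[simp] lemma inr_mem_firstReturnPieces {n : ℕ} {Q : List SkewStep} :
    Sum.inr Q ∈ firstReturnPieces n ↔ Q ≠ [] ∧ Q ∈ skewPaths n := by
  simp [firstReturnPieces]

lemma glueFirstReturn_mem_skewPaths {n : ℕ} {x} (hx : x ∈ firstReturnPieces n) :
    glueFirstReturn x ∈ skewPaths (n + 1) := by
  rcases x with ⟨p, Q, R⟩ | Q
  · simp only [inl_mem_firstReturnPieces, mem_skewPaths] at hx
    refine mem_skewPaths.2 ⟨?_, hx.2.1.2.up_cons_append_down hx.2.2.2⟩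
    simp only [glueFirstReturn, Sum.elim_inl, List.cons_append, List.length_cons,
      List.length_append]
    omega
  · simp only [inr_mem_firstReturnPieces, mem_skewPaths] at hx
    refine mem_skewPaths.2 ⟨?_, hx.2.2.up_cons_append_red hx.1⟩
    simp [glueFirstReturn, hx.2.1]
    ring

lemma glueFirstReturn_injOn (n : ℕ) : Set.InjOn glueFirstReturn (firstReturnPieces n) := by
  rintro (⟨p, Q, R⟩ | Q) hx (⟨p', Q', R'⟩ | Q') hx' he <;>
    simp only [Finset.mem_coe, inl_mem_firstReturnPieces, inr_mem_firstReturnPieces,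
      mem_skewPaths] at hx hx' <;>
    simp only [glueFirstReturn, Sum.elim_inl, Sum.elim_inr, List.cons_append, List.cons.injEq,
      true_and] at he
  · obtain ⟨rfl, -, rfl⟩ := hx.2.1.2.eq_of_append_cons_eq hx'.2.1.2 (by simp) (by simp) he
    obtain rfl : p = p' := Prod.ext (by omega) (by omega)
    rfl
  · simpa using (hx.2.1.2.eq_of_append_cons_eq hx'.2.2 (by simp) (by simp) he).2.1
  · simpa using (hx.2.2.eq_of_append_cons_eq hx'.2.1.2 (by simp) (by simp) he).2.1
  · rw [(hx.2.2.eq_of_append_cons_eq hx'.2.2 (by simp) (by simp) he).1]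

lemma glueFirstReturn_surjOn (n : ℕ) :
    Set.SurjOn glueFirstReturn (firstReturnPieces n) (skewPaths (n + 1)) := by
  intro l hl
  obtain ⟨hlen, hl⟩ := mem_skewPaths.1 hl
  rcases hl.eq_up_cons_append (by rintro rfl; simp at hlen) with
    ⟨Q, R, hQ, hR, rfl⟩ | ⟨Q, hQ, hne, rfl⟩
  · obtain ⟨a, ha⟩ := hQ.even_length
    obtain ⟨b, hb⟩ := hR.even_length
    simp only [List.cons_append, List.length_cons, List.length_append] at hlen
    refine ⟨.inl ⟨(a, b), Q, R⟩, ?_, rfl⟩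
    simp only [Finset.mem_coe, inl_mem_firstReturnPieces, mem_skewPaths, hQ, hR, and_true]
    omega
  · simp only [List.cons_append, List.length_cons, List.length_append, List.length_nil] at hlen
    refine ⟨.inr Q, ?_, rfl⟩
    simp only [Finset.mem_coe, inr_mem_firstReturnPieces, mem_skewPaths, hQ, and_true]
    exact ⟨hne, by omega⟩

lemma sum_skewPaths_succ {M : Type*} [AddCommMonoid M] (f : List SkewStep → M) (n : ℕ) :
    ∑ l ∈ skewPaths (n + 1), f l =
      ∑ p ∈ antidiagonal n, ∑ Q ∈ skewPaths p.1, ∑ R ∈ skewPaths p.2,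
        f (up :: Q ++ down :: R) + ∑ Q ∈ (skewPaths n).erase [], f (up :: Q ++ [red]) := by
  rw [← Finset.sum_nbij glueFirstReturn (fun _ => glueFirstReturn_mem_skewPaths)
    (glueFirstReturn_injOn n) (glueFirstReturn_surjOn n) (fun _ _ => rfl), firstReturnPieces,
    Finset.sum_disjSum, Finset.sum_sigma]
  simp [glueFirstReturn, Finset.sum_product]

section GeneratingFunction

variable (R : Type*) [CommRing R]

/-- The polynomial variable is the paper's `w`, marking red steps. -/
noncomputable def skewPoly (n : ℕ) : R[X] :=
  ∑ l ∈ skewPaths n, Polynomial.X ^ l.count red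

noncomputable def skewGF : R[X]⟦X⟧ :=
  mk (skewPoly R)

lemma coeff_skewPoly (n k : ℕ) :
    (skewPoly R n).coeff k =
      Nat.card {l : List SkewStep // l.length = 2 * n ∧ IsSkewPath l 0 ∧ l.count red = k} := by
  rw [skewPoly, Polynomial.finsetSum_coeff]
  simp only [Polynomial.coeff_X_pow, Finset.sum_boole]
  rw [← Nat.card_eq_finsetCard]
  exact congrArg _ (Nat.card_congr (Equiv.subtypeEquivRight fun l => by simp [eq_comm, and_assoc]))

lemma skewPoly_succ (n : ℕ) :
    skewPoly R (n + 1) = ∑ p ∈ antidiagonal n, skewPoly R p.1 * skewPoly R p.2 +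
      Polynomial.X * (skewPoly R n - if n = 0 then 1 else 0) := by
  have nonempty : ∑ Q ∈ (skewPaths n).erase [], (Polynomial.X : R[X]) ^ Q.count red =
      skewPoly R n - if n = 0 then 1 else 0 := by
    rcases eq_or_ne n 0 with rfl | hn
    · simp [skewPoly, skewPaths_zero]
    · rw [Finset.erase_eq_of_notMem (by simp [hn]), if_neg hn, sub_zero, skewPoly]
  rw [skewPoly, sum_skewPaths_succ, ← nonempty, Finset.mul_sum]
  simp [List.count_append, pow_add, pow_succ, Finset.sum_mul_sum, skewPoly, mul_comm]

lemma skewGF_eq :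
    skewGF R = 1 + X * skewGF R ^ 2 + C Polynomial.X * X * (skewGF R - 1) := by
  ext (_ | n)
  · simp [skewGF, skewPoly, skewPaths_zero]
  · rw [skewGF, coeff_mk, skewPoly_succ, mul_assoc, map_add, map_add, coeff_C_mul,
      coeff_succ_X_mul, coeff_succ_X_mul, pow_two, coeff_mul]
    simp [coeff_one]

end GeneratingFunction

lemma eq_skewGF {R : Type*} [CommRing R] {S : R[X]⟦X⟧}
    (hS : S = 1 + X * S ^ 2 + C Polynomial.X * X * (S - 1)) : S = skewGF R :=
  sub_eq_zero.1 <| eq_zero_of_eq_X_mul_mul (U := S + skewGF R + C Polynomial.X) <| by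
    linear_combination hS - skewGF_eq R

lemma eq_one_add_X_mul_sq_of_sq_eq {A : Type*} [CommRing A] [IsDomain A] [CharZero A]
    {W S w : A⟦X⟧} (hW : W ^ 2 = 1 - (4 + 2 * w) * X + (4 * w + w ^ 2) * X ^ 2)
    (hS : 2 * X * S = 1 - w * X - W) : S = 1 + X * S ^ 2 + w * X * (S - 1) := by
  have h : (4 * X : A⟦X⟧) * (S - (1 + X * S ^ 2 + w * X * (S - 1))) = 0 := by
    -- substitute `W = 1 - w X - 2 X S` into `hW`
    linear_combination (-1) * hW + (W + 1 - w * X - 2 * X * S) * hS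
  have h4 : (4 : A⟦X⟧) ≠ 0 := by
    rw [← map_ofNat (C (R := A)) 4, Ne, map_eq_zero_iff _ C_injective]
    norm_num
  exact sub_eq_zero.1 ((mul_eq_zero.1 h).resolve_left (mul_ne_zero h4 X_ne_zero))

lemma two_mul_mul_derivW0 {R : Type*} [CommRing R] [IsDomain R] [NeZero (2 : R)]
    {S : R[X]⟦X⟧} (hS : S = 1 + X * S ^ 2 + C Polynomial.X * X * (S - 1))
    {V : R⟦X⟧} (hV : V ^ 2 = 1 - 4 * X) (hV0 : constantCoeff V = 1) :
    2 * V * derivW0 S = 1 - 2 * X - V := by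
  set c := evalW0 S
  have hc : c = 1 + X * c ^ 2 := by simpa using congrArg evalW0 hS
  have hT : derivW0 S = X * (2 * c * derivW0 S) + X * (c - 1) := by
    have := congrArg derivW0 hS
    simp only [map_add, map_sub, map_mul, map_one, pow_two, derivW0_mul, derivW0_one, derivW0_X,
      derivW0_C_X, evalW0_X, evalW0_C_X] at this
    linear_combination this
  have hVc : V = 1 - 2 * X * c :=
    eq_of_sq_eq_sq (by linear_combination hV + 4 * X * hc) (by simp [hV0]) (by simp)
  rw [hVc]
  linear_combination 2 * hT

theorem redEdge_w1_general
    (W S : PowerSeries (Polynomial ℚ))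
    (w : PowerSeries (Polynomial ℚ))
    (hw : w = PowerSeries.C Polynomial.X)
    (hW : W ^ 2 = 1 - (4 + 2 * w) * PowerSeries.X
        + (4 * w + w ^ 2) * PowerSeries.X ^ 2)
    (hS : 2 * PowerSeries.X * S = 1 - w * PowerSeries.X - W)
    (T : PowerSeries ℚ)
    (hT : ∀ n : ℕ, (PowerSeries.coeff n S).coeff 1
        = PowerSeries.coeff n T)
    (V : PowerSeries ℚ)
    (hV : V ^ 2 = 1 - 4 * PowerSeries.X)
    (hV0 : PowerSeries.coeff 0 V = 1) :
    2 * V * T = 1 - 2 * PowerSeries.X - V ∧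
    ∀ n : ℕ, PowerSeries.coeff n T
      = Nat.card {l : List SkewStep //
          l.length = 2 * n ∧ IsSkewPath l 0 ∧ l.count SkewStep.red = 1} := by
  subst hw
  have hS' := eq_one_add_X_mul_sq_of_sq_eq hW hS
  have hT' : derivW0 S = T := ext fun n => by rw [coeff_derivW0, hT]
  refine ⟨hT' ▸ two_mul_mul_derivW0 hS' hV (by simpa using hV0), fun n => ?_⟩
  rw [← hT, eq_skewGF hS', skewGF, coeff_mk, coeff_skewPoly]

/-- The coefficient of `w¹` in `S(0) = (1 - wx - √(1-(4+2w)x+(4w+w²)x²))/(2x)`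
equals `(1-2x-√(1-4x))/(2√(1-4x))`; it is the generating function of skew Dyck
paths with exactly one south-west (red) step. -/
theorem redEdge_w1
    (W S : PowerSeries (Polynomial ℚ))
    (w : PowerSeries (Polynomial ℚ))
    (hw : w = PowerSeries.C Polynomial.X)
    (hW : W ^ 2 = 1 - (4 + 2 * w) * PowerSeries.X
        + (4 * w + w ^ 2) * PowerSeries.X ^ 2)
    (hW0 : PowerSeries.coeff 0 W = 1)
    (hS : 2 * PowerSeries.X * S = 1 - w * PowerSeries.X - W)
    (T : PowerSeries ℚ)
    (hT : ∀ n : ℕ, (PowerSeries.coeff n S).coeff 1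
        = PowerSeries.coeff n T)
    (V : PowerSeries ℚ)
    (hV : V ^ 2 = 1 - 4 * PowerSeries.X)
    (hV0 : PowerSeries.coeff 0 V = 1) :
    2 * V * T = 1 - 2 * PowerSeries.X - V ∧
    ∀ n : ℕ, PowerSeries.coeff n T
      = Nat.card {l : List SkewStep //
          l.length = 2 * n ∧ IsSkewPath l 0 ∧ l.count SkewStep.red = 1} :=
  redEdge_w1_general W S w hw hW hS T hT V hV hV0
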